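/- (Relaxation.) Let F ⊆ {−1,+1}^n be nonempty, let F′ ⊆ [−1,1]^n with F ⊆ F′, and define the extended distance d_H(y,F′) = 1/2 − (1/(2n)) max_{w∈F′} ⟨w, y⟩ and Rad(F′) = (1/(2n)) E_ε max_{w∈F′} ⟨ε, w⟩. Then there exists a randomized binary prediction algorithm A such that for every y ∈ {−1,+1}^n, μ_A(y) ≤ min_{w∈F} (1/n) Σ_{t=1}^n 1{w_t ≠ y_t} + Rad(F′); in particular μ_A(y) ≤ min_{w∈F} (1/n) Σ_t 1{w_t ≠ y_t} + α·Rad(F) for any α ≥ Rad(F′)/Rad(F). -/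

import Mathlib

open Finset

noncomputable section

/-- The real ±1 value of a Boolean bit (`true ↦ +1`, `false ↦ -1`). -/
def sgn (b : Bool) : ℝ := if b then 1 else -1

/-- The history (prefix) of the sequence `y` strictly before time `t`. -/
def pref {n : ℕ} (y : Fin n → Bool) (t : Fin n) : Fin t.1 → Bool :=
  fun s => y ⟨s.1, s.2.trans t.2⟩

/-- Expected proportion of mistakes `μ_A(y)` of the randomized algorithm whose prediction at
round `t` is a ±1 random variable with mean `q t (pref y t) ∈ [-1,1]`. -/
def mistakes (n : ℕ) (q : (t : Fin n) → (Fin t.1 → Bool) → ℝ) (y : Fin n → Bool) : ℝ :=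
  (1 / n) * ∑ t : Fin n, (1 - sgn (y t) * q t (pref y t)) / 2

/-- Expectation of `φ` under the uniform distribution on `{−1,+1}^n`
(sign sequences encoded as Boolean sequences). -/
def unifExp (n : ℕ) (φ : (Fin n → Bool) → ℝ) : ℝ :=
  (∑ y : Fin n → Bool, φ y) / 2 ^ n

/-- `φ` is stable: flipping any single coordinate changes its value by at most `1/n`. -/
def Stable (n : ℕ) (φ : (Fin n → Bool) → ℝ) : Prop :=
  ∀ (y : Fin n → Bool) (t : Fin n),
    |φ (Function.update y t true) - φ (Function.update y t false)| ≤ 1 / n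

/-- Normalized Hamming distance from `y` to a nonempty finite set `F ⊆ {−1,+1}^n`. -/
def dHam {n : ℕ} (F : Finset (Fin n → Bool)) (hF : F.Nonempty) (y : Fin n → Bool) : ℝ :=
  F.inf' hF fun w => (∑ t : Fin n, if w t ≠ y t then (1 : ℝ) else 0) / n

/-- Rademacher averages `Rad(F) = (1/(2n)) E_ε max_{w∈F} ⟨ε,w⟩` of a nonempty `F ⊆ {−1,+1}^n`. -/
def rad {n : ℕ} (F : Finset (Fin n → Bool)) (hF : F.Nonempty) : ℝ :=
  (unifExp n fun ε => F.sup' hF fun w => ∑ t : Fin n, sgn (w t) * sgn (ε t)) / (2 * n)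

/-- Rademacher averages `Rad(F′) = (1/(2n)) E_ε sup_{w∈F′} ⟨ε,w⟩` of a set `F′ ⊆ [−1,1]^n`. -/
def radSet (n : ℕ) (F' : Set (Fin n → ℝ)) : ℝ :=
  (unifExp n fun ε => sSup ((fun w => ∑ t : Fin n, w t * sgn (ε t)) '' F')) / (2 * n)

namespace RelaxAux

variable {n : ℕ}

def mrg (k : ℕ) (y ε : Fin n → Bool) : Fin n → Bool :=
  fun t => if t.1 < k then y t else ε t

def G (f : (Fin n → Bool) → ℝ) (k : ℕ) (y : Fin n → Bool) : ℝ :=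
  (∑ ε : Fin n → Bool, f (mrg k y ε)) / 2 ^ n

lemma sum_pair (g : (Fin n → Bool) → ℝ) (t : Fin n) :
    ∑ ε : Fin n → Bool, g ε =
      (∑ ε : Fin n → Bool, g (Function.update ε t true)
        + ∑ ε : Fin n → Bool, g (Function.update ε t false)) / 2 := by
  have key : ∀ b : Bool, ∑ ε : Fin n → Bool, g (Function.update ε t b)
      = 2 * ∑ r : {j : Fin n // j ≠ t} → Bool, g ((Equiv.funSplitAt t Bool).symm (b, r)) := by
    intro b
    rw [← Equiv.sum_comp (Equiv.funSplitAt t Bool).symm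
      (fun ε => g (Function.update ε t b)), Fintype.sum_prod_type]
    have h1 : ∀ (b' : Bool) (r : {j : Fin n // j ≠ t} → Bool),
        Function.update ((Equiv.funSplitAt t Bool).symm (b', r)) t b
          = (Equiv.funSplitAt t Bool).symm (b, r) := by
      intro b' r
      funext j
      rcases eq_or_ne j t with rfl | hj
      · simp [Equiv.funSplitAt, Equiv.piSplitAt, Function.update]
      · simp [Equiv.funSplitAt, Equiv.piSplitAt, Function.update, hj]
    simp only [h1]
    rw [Fintype.sum_bool]
    ring
  have h2 : ∑ ε : Fin n → Bool, g ε
      = ∑ r : {j : Fin n // j ≠ t} → Bool, g ((Equiv.funSplitAt t Bool).symm (true, r))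
        + ∑ r : {j : Fin n // j ≠ t} → Bool, g ((Equiv.funSplitAt t Bool).symm (false, r)) := by
    rw [← Equiv.sum_comp (Equiv.funSplitAt t Bool).symm g, Fintype.sum_prod_type,
      Fintype.sum_bool]
  rw [h2, key true, key false]
  ring

lemma G_prefix (f : (Fin n → Bool) → ℝ) (k : ℕ) (y y' : Fin n → Bool)
    (h : ∀ s : Fin n, s.1 < k → y s = y' s) : G f k y = G f k y' := by
  unfold G
  congr 1
  apply Finset.sum_congr rfl
  intro ε _
  congr 1
  funext s
  unfold mrg
  split_ifs with hs
  · exact h s hs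
  · rfl

lemma G_step (f : (Fin n → Bool) → ℝ) (t : Fin n) (y : Fin n → Bool) :
    G f t.1 y = (G f (t.1 + 1) (Function.update y t true)
      + G f (t.1 + 1) (Function.update y t false)) / 2 := by
  have hm : ∀ (b : Bool) (ε : Fin n → Bool),
      mrg t.1 y (Function.update ε t b) = mrg (t.1 + 1) (Function.update y t b) ε := by
    intro b ε
    funext s
    unfold mrg
    rcases eq_or_ne s t with rfl | hst
    · simp [Function.update]
    · have hv : s.1 ≠ t.1 := fun h => hst (Fin.ext h)
      rcases lt_or_gt_of_ne hv with h | h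
      · simp [Function.update, hst, h, Nat.lt_succ_of_lt h]
      · have h1 : ¬ s.1 < t.1 := by omega
        have h2 : ¬ s.1 < t.1 + 1 := by omega
        simp [Function.update, hst, h1, h2]
  unfold G
  rw [sum_pair (fun ε => f (mrg t.1 y ε)) t]
  simp only [hm]
  ring

lemma G_top (f : (Fin n → Bool) → ℝ) (y : Fin n → Bool) : G f n y = f y := by
  have h : ∀ ε : Fin n → Bool, mrg n y ε = y := by
    intro ε; funext s; simp [mrg, s.2]
  unfold G
  simp only [h, Finset.sum_const, Finset.card_univ]
  have h2 : (Fintype.card (Fin n → Bool) : ℝ) = 2 ^ n := by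
    simp [Fintype.card_fun]
  rw [nsmul_eq_mul, h2]
  field_simp

lemma G_bot (f : (Fin n → Bool) → ℝ) (y : Fin n → Bool) :
    G f 0 y = (∑ ε : Fin n → Bool, f ε) / 2 ^ n := by
  have h : ∀ ε : Fin n → Bool, mrg 0 y ε = ε := by
    intro ε; funext s; simp [mrg]
  unfold G
  simp only [h]

/-- extension of a prefix by a constant -/
def extc (t : Fin n) (h : Fin t.1 → Bool) (b : Bool) : Fin n → Bool :=
  fun s => if hs : s.1 < t.1 then h ⟨s.1, hs⟩ else b

end RelaxAux

open RelaxAux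

/-- Relaxation: if the combinatorial set `F ⊆ {−1,+1}^n` is contained (via the
±1 embedding) in `F′ ⊆ [−1,1]^n`, there is a randomized binary prediction algorithm whose
expected proportion of mistakes on every `y` is at most `d_H(y,F) + Rad(F′)`; in particular it is
at most `d_H(y,F) + α·Rad(F)` for any `α` with `Rad(F′) ≤ α·Rad(F)`. -/
theorem relaxation (n : ℕ) (hn : 1 ≤ n) (F : Finset (Fin n → Bool)) (hF : F.Nonempty)
    (F' : Set (Fin n → ℝ)) (hbox : ∀ w ∈ F', ∀ t : Fin n, |w t| ≤ 1)
    (hsub : ∀ w ∈ F, (fun t => sgn (w t)) ∈ F') :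
    ∃ q : (t : Fin n) → (Fin t.1 → Bool) → ℝ,
      (∀ (t : Fin n) (h : Fin t.1 → Bool), |q t h| ≤ 1) ∧
      (∀ y : Fin n → Bool, mistakes n q y ≤ dHam F hF y + radSet n F') ∧
      ∀ α : ℝ, radSet n F' ≤ α * rad F hF →
        ∀ y : Fin n → Bool, mistakes n q y ≤ dHam F hF y + α * rad F hF := by
  classical
  have hn0 : (0:ℝ) < n := by exact_mod_cast hn
  obtain ⟨w₁, hw₁⟩ := id hF
  have hF'ne : F'.Nonempty := ⟨_, hsub w₁ hw₁⟩
  set f : (Fin n → Bool) → ℝ :=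
    fun σ => sSup ((fun w => ∑ t : Fin n, w t * sgn (σ t)) '' F') with hfdef
  have hsgn : ∀ b : Bool, |sgn b| = 1 := by intro b; cases b <;> simp [sgn]
  have hbdd : ∀ σ : Fin n → Bool,
      BddAbove ((fun w => ∑ t : Fin n, w t * sgn (σ t)) '' F') := by
    intro σ
    refine ⟨n, ?_⟩
    rintro x ⟨w, hw, rfl⟩
    calc ∑ t : Fin n, w t * sgn (σ t) ≤ ∑ _t : Fin n, (1:ℝ) := by
          apply Finset.sum_le_sum; intro t _
          calc w t * sgn (σ t) ≤ |w t * sgn (σ t)| := le_abs_self _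
            _ = |w t| * |sgn (σ t)| := abs_mul _ _
            _ ≤ 1 := by rw [hsgn]; simpa using hbox w hw t
      _ = n := by simp
  have himgne : ∀ σ : Fin n → Bool,
      ((fun w => ∑ t : Fin n, w t * sgn (σ t)) '' F').Nonempty :=
    fun σ => hF'ne.image _
  -- flipping one coordinate changes f by at most 2
  have fdiff1 : ∀ (t : Fin n) (σ σ' : Fin n → Bool), (∀ s, s ≠ t → σ s = σ' s) →
      f σ ≤ f σ' + 2 := by
    intro t σ σ' hss
    apply csSup_le (himgne σ)
    rintro x ⟨w, hw, rfl⟩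
    have key : ∑ s : Fin n, w s * sgn (σ s) - ∑ s : Fin n, w s * sgn (σ' s)
        = w t * sgn (σ t) - w t * sgn (σ' t) := by
      rw [← Finset.sum_sub_distrib]
      rw [Finset.sum_eq_single t]
      · intro s _ hst; rw [hss s hst]; ring
      · intro hs; exact absurd (Finset.mem_univ t) hs
    have hb : w t * sgn (σ t) - w t * sgn (σ' t) ≤ 2 := by
      have h1 : |w t * sgn (σ t)| ≤ 1 := by
        rw [abs_mul, hsgn]; simpa using hbox w hw t
      have h2 : |w t * sgn (σ' t)| ≤ 1 := by
        rw [abs_mul, hsgn]; simpa using hbox w hw t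
      have := abs_le.1 h1
      have := abs_le.1 h2
      linarith [ (abs_le.1 h1).2, (abs_le.1 h2).1 ]
    have hle : ∑ s : Fin n, w s * sgn (σ' s) ≤ f σ' :=
      le_csSup (hbdd σ') ⟨w, hw, rfl⟩
    linarith [key, hb, hle]
  have fdiff : ∀ (t : Fin n) (σ σ' : Fin n → Bool), (∀ s, s ≠ t → σ s = σ' s) →
      |f σ - f σ'| ≤ 2 := by
    intro t σ σ' hss
    rw [abs_sub_le_iff]
    constructor
    · linarith [fdiff1 t σ σ' hss]
    · linarith [fdiff1 t σ' σ (fun s hs => (hss s hs).symm)]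
  -- the algorithm
  set q : (t : Fin n) → (Fin t.1 → Bool) → ℝ := fun t h =>
    (G f (t.1 + 1) (extc t h true) - G f (t.1 + 1) (extc t h false)) / 2 with hqdef
  -- |q| ≤ 1
  have hq1 : ∀ (t : Fin n) (h : Fin t.1 → Bool), |q t h| ≤ 1 := by
    intro t h
    have hG : |G f (t.1 + 1) (extc t h true) - G f (t.1 + 1) (extc t h false)| ≤ 2 := by
      unfold G
      rw [div_sub_div_same, ← Finset.sum_sub_distrib, abs_div]
      have hstep : |∑ ε : Fin n → Bool,
          (f (mrg (t.1+1) (extc t h true) ε) - f (mrg (t.1+1) (extc t h false) ε))|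
          ≤ ∑ _ε : Fin n → Bool, (2:ℝ) := by
        refine (Finset.abs_sum_le_sum_abs _ _).trans ?_
        apply Finset.sum_le_sum
        intro ε _
        apply fdiff t
        intro s hst
        unfold mrg extc
        rcases Nat.lt_or_ge s.1 (t.1+1) with hlt | hge
        · have hs' : s.1 < t.1 := by
            have : s.1 ≠ t.1 := fun hh => hst (Fin.ext hh)
            omega
          simp [hlt, hs']
        · have : ¬ s.1 < t.1 + 1 := by omega
          simp [this]
      have h2 : |(2:ℝ) ^ n| = 2 ^ n := abs_of_pos (by positivity)
      rw [h2, div_le_iff₀ (by positivity)]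
      calc |∑ ε : Fin n → Bool,
          (f (mrg (t.1+1) (extc t h true) ε) - f (mrg (t.1+1) (extc t h false) ε))|
          ≤ ∑ _ε : Fin n → Bool, (2:ℝ) := hstep
        _ = 2 * 2 ^ n := by
            rw [Finset.sum_const, Finset.card_univ, nsmul_eq_mul]
            simp [Fintype.card_fun, mul_comm]
    show |(G f (t.1 + 1) (extc t h true) - G f (t.1 + 1) (extc t h false)) / 2| ≤ 1
    rw [abs_div]
    simp only [abs_two]
    linarith [hG, abs_nonneg (G f (t.1 + 1) (extc t h true) - G f (t.1 + 1) (extc t h false))]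
  -- per round identity
  have hround : ∀ (y : Fin n → Bool) (t : Fin n),
      G f (t.1 + 1) y = G f t.1 y + sgn (y t) * q t (pref y t) := by
    intro y t
    have hext : ∀ b : Bool, G f (t.1 + 1) (extc t (pref y t) b)
        = G f (t.1 + 1) (Function.update y t b) := by
      intro b
      apply G_prefix
      intro s hs
      unfold extc pref Function.update
      rcases eq_or_ne s t with rfl | hst
      · simp
      · have hv : s.1 ≠ t.1 := fun hh => hst (Fin.ext hh)
        have hlt : s.1 < t.1 := by omega
        simp only [dif_pos hlt, hst, dif_neg]
        simp
    have hstep := G_step f t y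
    have hq : q t (pref y t) = (G f (t.1 + 1) (Function.update y t true)
        - G f (t.1 + 1) (Function.update y t false)) / 2 := by
      show (G f (t.1 + 1) (extc t (pref y t) true)
        - G f (t.1 + 1) (extc t (pref y t) false)) / 2 = _
      rw [hext true, hext false]
    cases hyt : y t
    · have hupd : Function.update y t false = y := by
        funext s; unfold Function.update
        rcases eq_or_ne s t with rfl | hst
        · simp [hyt]
        · simp [hst]
      rw [hq, hstep, hupd]
      have hs : sgn false = -1 := by simp [sgn]
      rw [hs]; ring
    · have hupd : Function.update y t true = y := by
        funext s; unfold Function.update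
        rcases eq_or_ne s t with rfl | hst
        · simp [hyt]
        · simp [hst]
      rw [hq, hstep, hupd]
      have hs : sgn true = 1 := by simp [sgn]
      rw [hs]; ring
  -- telescoping
  have htel : ∀ y : Fin n → Bool,
      ∑ t : Fin n, sgn (y t) * q t (pref y t) = f y - unifExp n f := by
    intro y
    have h1 : ∀ t : Fin n, sgn (y t) * q t (pref y t)
        = G f (t.1 + 1) y - G f t.1 y := by
      intro t; have := hround y t; linarith
    calc ∑ t : Fin n, sgn (y t) * q t (pref y t)
        = ∑ t : Fin n, (G f (t.1 + 1) y - G f t.1 y) := Finset.sum_congr rfl (fun t _ => h1 t)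
      _ = ∑ k ∈ Finset.range n, (G f (k + 1) y - G f k y) :=
          Fin.sum_univ_eq_sum_range (fun k => G f (k + 1) y - G f k y) n
      _ = G f n y - G f 0 y := Finset.sum_range_sub (fun k => G f k y) n
      _ = f y - unifExp n f := by rw [G_top, G_bot]; rfl
  -- main bound
  have hmain : ∀ y : Fin n → Bool, mistakes n q y ≤ dHam F hF y + radSet n F' := by
    intro y
    -- rewrite mistakes
    have hmis : mistakes n q y = 1/2 - (f y - unifExp n f) / (2 * n) := by
      unfold mistakes
      have : ∑ t : Fin n, (1 - sgn (y t) * q t (pref y t)) / 2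
          = (n - ∑ t : Fin n, sgn (y t) * q t (pref y t)) / 2 := by
        rw [← Finset.sum_div, Finset.sum_sub_distrib]
        simp
      rw [this, htel y]
      have hne : (n:ℝ) ≠ 0 := ne_of_gt hn0
      field_simp
    have hrs : radSet n F' = unifExp n f / (2 * n) := rfl
    -- pick minimizing w
    obtain ⟨w₀, hw₀F, hw₀⟩ := Finset.exists_mem_eq_inf' hF
      (fun w => (∑ t : Fin n, if w t ≠ y t then (1 : ℝ) else 0) / n)
    have hcount : ∑ t : Fin n, (if w₀ t ≠ y t then (1:ℝ) else 0)
        = (n - ∑ t : Fin n, sgn (w₀ t) * sgn (y t)) / 2 := by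
      have h1 : ∀ t : Fin n, (if w₀ t ≠ y t then (1:ℝ) else 0)
          = (1 - sgn (w₀ t) * sgn (y t)) / 2 := by
        intro t; cases hwt : w₀ t <;> cases hyt : y t <;> simp [sgn]
      rw [Finset.sum_congr rfl (fun t _ => h1 t), ← Finset.sum_div,
        Finset.sum_sub_distrib]
      simp
    have hS : ∑ t : Fin n, sgn (w₀ t) * sgn (y t) ≤ f y := by
      have : (∑ t : Fin n, sgn (w₀ t) * sgn (y t))
          ∈ ((fun w => ∑ t : Fin n, w t * sgn (y t)) '' F') :=
        ⟨fun t => sgn (w₀ t), hsub w₀ hw₀F, rfl⟩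
      exact le_csSup (hbdd y) this
    have hdh : dHam F hF y = (n - ∑ t : Fin n, sgn (w₀ t) * sgn (y t)) / (2 * n) := by
      unfold dHam
      rw [hw₀, hcount, div_div]
    rw [hmis, hrs, hdh]
    have h2n : (0:ℝ) < 2 * n := by linarith
    set E := unifExp n f with hE
    set S₀ := ∑ t : Fin n, sgn (w₀ t) * sgn (y t) with hS₀
    have key : ((n:ℝ) - S₀) / (2 * n) + E / (2 * n)
        - (1 / 2 - (f y - E) / (2 * n)) = (f y - S₀) / (2 * n) := by
      field_simp
      ring
    have hnum : 0 ≤ (f y - S₀) / (2 * n) := div_nonneg (by linarith [hS]) (le_of_lt h2n)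
    linarith [key, hnum]
  refine ⟨q, hq1, hmain, ?_⟩
  intro α hα y
  have := hmain y
  linarith
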